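/- arXiv:2511.06358 — 4 statements merged into one kernel-verified Lean document; each statement's English description precedes it below -/
import Mathlib

section
/- Let M be a monoid satisfying the identities x² ≈ x³ and x²y ≈ yx² (for all elements x, y of M). If M also satisfies the identity xyxzx ≈ x^p y x^q z x^r for some non-negative integers p, q, r with p + q + r ≥ 2 and (p > 1 or q > 1 or r > 1), then M satisfies the identity xyxzx ≈ x²yz. -/
theorem stmt6 {M : Type*} [Monoid M] (p q r : ℕ)
    (h1 : ∀ x : M, x * x = x * x * x)
    (h2 : ∀ x y : M, x * x * y = y * (x * x))
    (hpqr : 2 ≤ p + q + r)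
    (hbig : 1 < p ∨ 1 < q ∨ 1 < r)
    (h3 : ∀ x y z : M, x * y * x * z * x = x ^ p * y * x ^ q * z * x ^ r) :
    ∀ x y z : M, x * y * x * z * x = x * x * y * z := by
  intro x y z
  have c2 : ∀ n, 2 ≤ n → x ^ n = x * x := by
    intro n hn
    induction n with
    | zero => omega
    | succ m ih =>
      rcases Nat.lt_or_ge m 2 with h | h
      · have hm : m = 1 := by omega
        subst hm
        rw [pow_succ, pow_one]
      · rw [pow_succ, ih h, mul_assoc] at *
        rw [← mul_assoc, ← h1]
  have hc : ∀ a : M, x * x * a = a * (x * x) := h2 x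
  have habs : ∀ m, x * x * x ^ m = x * x := by
    intro m
    have h := (pow_add x 2 m).symm
    rw [sq] at h
    rw [h]
    exact c2 (2 + m) (by omega)
  have habs' : ∀ m, x ^ m * (x * x) = x * x := by
    intro m; rw [← hc, habs]
  rw [h3]
  rcases hbig with hp | hq | hr
  · rw [c2 p (by omega)]
    calc x * x * y * x ^ q * z * x ^ r
        = y * (x * x * x ^ q) * z * x ^ r := by rw [hc y, mul_assoc y]
      _ = y * (x * x) * z * x ^ r := by rw [habs]
      _ = x * x * y * z * x ^ r := by rw [← hc y]
      _ = y * z * (x * x * x ^ r) := by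
            rw [mul_assoc (x*x), hc (y*z), mul_assoc]
      _ = y * z * (x * x) := by rw [habs]
      _ = x * x * y * z := by rw [← hc (y*z)]; simp [mul_assoc]
  · rw [c2 q (by omega)]
    calc x ^ p * y * (x * x) * z * x ^ r
        = x ^ p * (x * x) * y * z * x ^ r := by
            rw [mul_assoc (x^p), ← hc y, ← mul_assoc, ← mul_assoc]
      _ = x * x * y * z * x ^ r := by rw [habs']
      _ = y * z * (x * x * x ^ r) := by
            rw [mul_assoc (x*x), hc (y*z), mul_assoc]
      _ = y * z * (x * x) := by rw [habs]
      _ = x * x * y * z := by rw [← hc (y*z)]; simp [mul_assoc]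
  · rw [c2 r (by omega)]
    calc x ^ p * y * x ^ q * z * (x * x)
        = x ^ p * y * x ^ q * (x * x) * z := by
            rw [mul_assoc _ z, ← hc z, ← mul_assoc]
      _ = x ^ p * y * (x * x) * z := by rw [mul_assoc (x^p*y), habs']
      _ = x ^ p * (x * x) * y * z := by
            rw [mul_assoc (x^p), ← hc y, ← mul_assoc, ← mul_assoc]
      _ = x * x * y * z := by rw [habs']
end

section
/- Let u = x t₁ x t₂ x ⋯ t_k x be the word in which the letter x alternates with k distinct simple letters t₁, …, t_k (so x occurs k+1 times). Suppose a monoid M satisfies a non-trivial identity u ≈ w where w = x^{e₀} t₁ x^{e₁} ⋯ t_k x^{e_k} for some non-negative integers e₀, …, e_k, and suppose the word x t₁ x ⋯ t_{k−1} x is an isoterm for M (i.e., M satisfies no non-trivial identity with left-hand side x t₁ x ⋯ t_{k−1} x). Then at least one of the numbers e₀, …, e_k exceeds 1. -/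
namespace Stmt9Aux

variable {X : Type*}

def subst (σ : X → List X) (l : List X) : List X := (l.map σ).flatten

@[simp] lemma subst_cons (σ : X → List X) (a : X) (l : List X) :
    subst σ (a :: l) = σ a ++ subst σ l := rfl

lemma subst_append (σ : X → List X) (l₁ l₂ : List X) :
    subst σ (l₁ ++ l₂) = subst σ l₁ ++ subst σ l₂ := by
  simp [subst]

lemma subst_flatten (σ : X → List X) (L : List (List X)) :
    subst σ L.flatten = (L.map (subst σ)).flatten := by
  induction L with
  | nil => rfl
  | cons a L ih => simp [List.flatten_cons, subst_append, ih]

lemma subst_replicate (σ : X → List X) (x : X) (hσ : σ x = [x]) (n : ℕ) :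
    subst σ (List.replicate n x) = List.replicate n x := by
  induction n with
  | zero => rfl
  | succ n ih =>
      rw [List.replicate_succ, subst_cons, ih, hσ]
      rfl

lemma prod_map_subst {M : Type*} [Monoid M] (σ : X → List X) (φ : X → M) (l : List X) :
    ((subst σ l).map φ).prod = (l.map (fun a => ((σ a).map φ).prod)).prod := by
  induction l with
  | nil => rfl
  | cons a l ih =>
      rw [subst_cons, List.map_append, List.prod_append, ih, List.map_cons, List.prod_cons]

lemma regroup (a f : ℕ → List X) (n : ℕ) :
    a 0 ++ ((List.range n).map (fun i => f i ++ a (i+1))).flatten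
    = ((List.range n).map (fun i => a i ++ f i)).flatten ++ a n := by
  induction n with
  | zero => simp
  | succ n ih =>
      rw [List.range_succ]
      simp only [List.map_append, List.flatten_append, List.map_cons, List.map_nil,
        List.flatten_cons, List.flatten_nil, List.append_nil, ← List.append_assoc, ih]

lemma rot (x : X) (t : ℕ → X) (n : ℕ) :
    ((List.range n).map (fun i => [x, t i])).flatten ++ [x]
    = x :: ((List.range n).map (fun i => [t i, x])).flatten := by
  induction n with
  | zero => rfl
  | succ n ih =>
      rw [List.range_succ]
      simp only [List.map_append, List.flatten_append, List.map_cons, List.map_nil,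
        List.flatten_cons, List.flatten_nil, List.append_nil]
      rw [List.append_assoc]
      have h2 : ([x, t n] : List X) ++ [x] = [x] ++ [t n, x] := rfl
      rw [h2, ← List.append_assoc, ih]
      rfl

lemma exists_sigma (k : ℕ) (x : X) (t : ℕ → X)
    (hinj : ∀ i < k, ∀ j < k, t i = t j → i = j)
    (hxt : ∀ i < k, t i ≠ x) (F : ℕ → List X) :
    ∃ σ : X → List X, σ x = [x] ∧ ∀ i < k, σ (t i) = F i := by
  classical
  refine ⟨fun a => if h : ∃ j, j < k ∧ t j = a then F (Nat.find h) else [a], ?_, ?_⟩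
  · have hcond : ¬ ∃ j, j < k ∧ t j = x := by
      push_neg
      exact fun j hj => hxt j hj
    simp only [dif_neg hcond]
  · intro i hi
    have h : ∃ j, j < k ∧ t j = t i := ⟨i, hi, rfl⟩
    simp only [dif_pos h]
    congr 1
    exact hinj _ (Nat.find_spec h).1 _ hi (Nat.find_spec h).2

end Stmt9Aux

open Stmt9Aux in
theorem stmt9 {X M : Type*} [Monoid M] (k : ℕ) (hk : 1 ≤ k)
    (x : X) (t : ℕ → X)
    (hinj : ∀ i < k, ∀ j < k, t i = t j → i = j)
    (hxt : ∀ i < k, t i ≠ x)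
    (u : List X) (hu : u = x :: ((List.range k).map (fun i => [t i, x])).flatten)
    (e : ℕ → ℕ) (w : List X)
    (hw : w = List.replicate (e 0) x ++
        ((List.range k).map (fun i => t i :: List.replicate (e (i + 1)) x)).flatten)
    (hne : u ≠ w)
    (hsat : ∀ φ : X → M, (u.map φ).prod = (w.map φ).prod)
    (u₀ : List X)
    (hu₀ : u₀ = x :: ((List.range (k - 1)).map (fun i => [t i, x])).flatten)
    (hiso : ∀ v : List X, (∀ φ : X → M, (u₀.map φ).prod = (v.map φ).prod) → v = u₀) :
    ∃ i ≤ k, 1 < e i := by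
  classical
  by_contra hcon
  push_neg at hcon
  -- hcon : ∀ i ≤ k, e i ≤ 1
  exfalso
  -- a zero exponent exists
  have hz : ∃ z, z ≤ k ∧ e z = 0 := by
    by_contra h'
    push_neg at h'
    apply hne
    have h1 : ∀ i ≤ k, e i = 1 := fun i hi =>
      le_antisymm (hcon i hi) (Nat.one_le_iff_ne_zero.2 (h' i hi))
    have hmap : List.map (fun i => t i :: List.replicate (e (i+1)) x) (List.range k)
        = List.map (fun i => [t i, x]) (List.range k) :=
      List.map_congr_left (fun i hi => by
        show t i :: List.replicate (e (i+1)) x = [t i, x]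
        rw [h1 (i+1) (by have := List.mem_range.1 hi; omega)]
        rfl)
    rw [hu, hw, h1 0 (Nat.zero_le k), hmap]
    rfl
  obtain ⟨z, hzk, hez⟩ := hz
  -- the shared final argument
  have final : ∀ σ : X → List X, σ x = [x] → subst σ w = u₀ → False := by
    intro σ hσx hW
    have hsat' : ∀ φ : X → M, (u₀.map φ).prod = ((subst σ u).map φ).prod := by
      intro φ
      rw [← hW, prod_map_subst, prod_map_subst]
      exact (hsat _).symm
    have hv := hiso _ hsat'
    have hcu : List.count x (subst σ u) = List.count x u₀ := by rw [hv]
    have h1 : List.count x u₀ = k := by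
      rw [hu₀, List.count_cons_self, List.count_flatten, List.map_map]
      rw [List.map_congr_left (g := fun _ => 1) (fun i hi => by
        have hik : i < k := by have := List.mem_range.1 hi; omega
        show List.count x [t i, x] = 1
        simp [List.count_cons, hxt i hik])]
      simp [List.sum_replicate, List.map_const']
      omega
    have h2 : k + 1 ≤ List.count x (subst σ u) := by
      rw [hu, subst_cons, subst_flatten, List.map_map, hσx,
        List.count_append, List.count_flatten, List.map_map]
      have hone : List.count x ([x] : List X) = 1 := by simp
      have hlen : k ≤ ((List.range k).map
          (List.count x ∘ (subst σ ∘ fun i => [t i, x]))).sum := by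
        have := List.length_le_sum_of_one_le
          ((List.range k).map (List.count x ∘ (subst σ ∘ fun i => [t i, x]))) ?_
        · simpa using this
        · intro a ha
          obtain ⟨i, hi, rfl⟩ := List.mem_map.1 ha
          show 1 ≤ List.count x (subst σ [t i, x])
          have : subst σ [t i, x] = σ (t i) ++ ([x] ++ []) := by
            simp [subst, hσx]
          rw [this, List.count_append, List.count_append]
          simp
      omega
    omega
  -- case split
  by_cases hek : e k = 0
  · -- Case B : delete t (k-1), pad before each t
    set F : ℕ → List X :=
      fun i => List.replicate (1 - e i) x ++ (if i = k-1 then [] else [t i]) with hF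
    obtain ⟨σ, hσx, hσt⟩ := exists_sigma k x t hinj hxt F
    refine final σ hσx ?_
    have hsw : subst σ w = List.replicate (e 0) x ++
        ((List.range k).map (fun i => F i ++ List.replicate (e (i+1)) x)).flatten := by
      rw [hw, subst_append, subst_replicate σ x hσx, subst_flatten, List.map_map]
      refine congrArg _ (congrArg List.flatten (List.map_congr_left ?_))
      intro i hi
      have hik : i < k := List.mem_range.1 hi
      show subst σ (t i :: List.replicate (e (i+1)) x) = _
      rw [subst_cons, subst_replicate σ x hσx, hσt i hik]
    rw [hsw, regroup (fun i => List.replicate (e i) x) F k, hek]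
    have hblock : ∀ i ∈ List.range k,
        List.replicate (e i) x ++ F i = (if i = k-1 then [x] else [x, t i]) := by
      intro i hi
      have hik : i < k := List.mem_range.1 hi
      have hei : e i + (1 - e i) = 1 := by have := hcon i (le_of_lt hik); omega
      by_cases h : i = k-1
      · rw [if_pos h, hF]
        simp only [if_pos h, List.append_nil, ← List.replicate_add, hei]
        rfl
      · rw [if_neg h, hF]
        simp only [if_neg h, ← List.append_assoc, ← List.replicate_add, hei]
        rfl
    rw [List.map_congr_left hblock]
    have hsplit : List.range k = List.range (k-1) ++ [k-1] := by
      rw [← List.range_succ]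
      congr 1
      omega
    rw [hsplit, List.map_append, List.flatten_append]
    simp only [List.map_cons, List.map_nil, if_pos rfl, if_true, List.flatten_cons,
      List.flatten_nil, List.append_nil, List.replicate_zero]
    rw [List.map_congr_left (g := fun i => [x, t i]) (fun i hi => by
      have : i < k - 1 := List.mem_range.1 hi
      show (if i = k-1 then [x] else [x, t i]) = [x, t i]
      rw [if_neg (by omega)])]
    rw [hu₀, ← rot x t (k-1)]
  · -- Case A : e k = 1, e z = 0, z < k ; delete t z
    have hek1 : e k = 1 := by have := hcon k le_rfl; omega
    have hzk' : z < k := by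
      rcases Nat.lt_or_ge z k with h | h
      · exact h
      · exfalso; have : z = k := by omega
        rw [this, hek1] at hez; omega
    set F : ℕ → List X := fun i => if i = z then [] else
      List.replicate (1 - e i) x ++ [t (if i < z then i else i - 1)] with hF
    obtain ⟨σ, hσx, hσt⟩ := exists_sigma k x t hinj hxt F
    refine final σ hσx ?_
    have hsw : subst σ w = List.replicate (e 0) x ++
        ((List.range k).map (fun i => F i ++ List.replicate (e (i+1)) x)).flatten := by
      rw [hw, subst_append, subst_replicate σ x hσx, subst_flatten, List.map_map]
      refine congrArg _ (congrArg List.flatten (List.map_congr_left ?_))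
      intro i hi
      have hik : i < k := List.mem_range.1 hi
      show subst σ (t i :: List.replicate (e (i+1)) x) = _
      rw [subst_cons, subst_replicate σ x hσx, hσt i hik]
    rw [hsw, regroup (fun i => List.replicate (e i) x) F k, hek1]
    have hblock : ∀ i ∈ List.range k,
        List.replicate (e i) x ++ F i
          = (if i = z then [] else [x, t (if i < z then i else i - 1)]) := by
      intro i hi
      have hik : i < k := List.mem_range.1 hi
      have hei : e i + (1 - e i) = 1 := by have := hcon i (le_of_lt hik); omega
      by_cases h : i = z
      · rw [if_pos h, hF]
        simp only [if_pos h, List.append_nil]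
        rw [h, hez]
        rfl
      · rw [if_neg h, hF]
        simp only [if_neg h, ← List.append_assoc, ← List.replicate_add, hei]
        rfl
    rw [List.map_congr_left hblock]
    -- split range k at z
    have hsplit : List.range k = List.range (z+1) ++ (List.range (k-z-1)).map (fun j => (z+1) + j) := by
      rw [← List.range_add]
      congr 1
      omega
    rw [hsplit, List.map_append, List.flatten_append, List.map_map]
    rw [List.range_succ, List.map_append, List.flatten_append]
    simp only [List.map_cons, List.map_nil, if_pos rfl, List.flatten_cons, List.flatten_nil,
      List.append_nil]
    rw [List.map_congr_left (l := List.range z) (g := fun i => [x, t i]) (fun i hi => by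
      have hiz : i < z := List.mem_range.1 hi
      show (if i = z then [] else [x, t (if i < z then i else i - 1)]) = [x, t i]
      rw [if_neg (by omega), if_pos hiz])]
    rw [List.map_congr_left (l := List.range (k-z-1)) (g := fun j => [x, t (z + j)]) (fun j hj => by
      have h1 : z+1+j ≠ z := by omega
      have h2 : ¬ (z+1+j < z) := by omega
      have h3 : z+1+j-1 = z+j := by omega
      show (if z+1+j = z then ([] : List X)
        else [x, t (if z+1+j < z then z+1+j else z+1+j-1)]) = [x, t (z+j)]
      rw [if_neg h1, if_neg h2, h3])]
    -- now: flatten(map [x,t i] range z) ++ flatten(map [x, t (z+j)] range (k-z-1)) ++ [x] = u₀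
    rw [hu₀, ← rot x t (k-1)]
    have hsplit2 : List.range (k-1) = List.range z ++ (List.range (k-z-1)).map (fun j => z + j) := by
      rw [← List.range_add]
      congr 1
      omega
    rw [hsplit2, List.map_append, List.flatten_append, List.map_map]
    simp only [Function.comp_def, if_true, List.replicate_one, List.append_assoc, List.nil_append, List.append_nil]
end

section
/- Let M be a monoid satisfying x²y ≈ xyx ≈ yx² (i.e., ∀ x y ∈ M: x·x·y = x·y·x = y·x·x). Then M satisfies the identities xyzxty ≈ yxzxty, xzytxy ≈ xzytyx, xzxtxysy ≈ xzxtyxsy, and xzxytysy ≈ xzyxtysy, and also x² ≈ x³ need not be assumed: from x²y ≈ xyx ≈ yx², the identity xyzxty ≈ yxzxty follows. -/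
theorem stmt12 {M : Type*} [Monoid M]
    (h1 : ∀ x y : M, x * x * y = x * y * x)
    (h2 : ∀ x y : M, x * y * x = y * (x * x)) :
    (∀ x y z t : M, x * y * z * x * t * y = y * x * z * x * t * y) ∧
    (∀ x y z t : M, x * z * y * t * x * y = x * z * y * t * y * x) ∧
    (∀ x y z t s : M, x * z * x * t * x * y * s * y = x * z * x * t * y * x * s * y) ∧
    (∀ x y z t s : M, x * z * x * y * t * y * s * y = x * z * y * x * t * y * s * y) := by
  -- sandwich with continuation
  have sand : ∀ a w c : M, a * (w * (a * c)) = a * (a * (w * c)) := by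
    intro a w c
    calc a * (w * (a * c)) = (a * w * a) * c := by simp [mul_assoc]
    _ = (a * a * w) * c := by rw [← h1]
    _ = a * (a * (w * c)) := by simp [mul_assoc]
  -- sandwich at end
  have sand2 : ∀ a w : M, a * (w * a) = a * (a * w) := by
    intro a w
    rw [← mul_assoc, ← mul_assoc, ← h1]
  -- square is central (with continuation)
  have cen : ∀ a b c : M, a * (a * (b * c)) = b * (a * (a * c)) := by
    intro a b c
    calc a * (a * (b * c)) = (a * a * b) * c := by simp [mul_assoc]
    _ = (b * (a * a)) * c := by rw [h1, h2]
    _ = b * (a * (a * c)) := by simp [mul_assoc]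
  have cen2 : ∀ a b : M, a * (a * b) = b * (a * a) := by
    intro a b
    rw [← mul_assoc, h1, h2]
  refine ⟨?_, ?_, ?_, ?_⟩
  · intro x y z t
    simp only [mul_assoc]
    rw [← mul_assoc y z, sand x (y*z), mul_assoc y z, sand x z, ← cen x y]
  · intro x y z t
    simp only [mul_assoc]
    rw [← mul_assoc y t, ← mul_assoc z (y*t), sand x (z*(y*t)),
        ← mul_assoc t y, ← mul_assoc y (t*y), ← mul_assoc z (y*(t*y)) x,
        sand2 x (z*(y*(t*y)))]
    simp only [mul_assoc]
  · intro x y z t s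
    simp only [mul_assoc]
    rw [sand2 y s, ← mul_assoc x s, sand2 y (x*s), cen y x]
  · intro x y z t s
    simp only [mul_assoc]
    rw [sand x z, ← mul_assoc z y (x*(t*(y*(s*y)))), sand x (z*y)]
    simp only [mul_assoc]
end

section
/- Let u and v be words in the free monoid over an alphabet X such that u and v have the same set of simple letters {t₁, …, t_m} appearing in the same order, i.e., u = u₀t₁u₁⋯t_m u_m and v = v₀t₁v₁⋯t_m v_m where all letters of u₀⋯u_m and v₀⋯v_m are multiple in u and v respectively. Suppose a monoid M satisfies the identity xzxyty ≈ xzyxty. Then M satisfies u ≈ u′ where u′ = p₀q₀t₁p₁q₁⋯t_m p_m q_m, with p_i the subsequence of u_i consisting of first occurrences (in u) of letters and q_i the subsequence of non-first occurrences. -/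
/-- The subsequence of a word consisting of the first occurrences of letters,
given a list `seen` of letters already encountered. -/
def firstOccs {X : Type*} [DecidableEq X] : List X → List X → List X
  | _, [] => []
  | seen, a :: rest =>
      if a ∈ seen then firstOccs seen rest else a :: firstOccs (a :: seen) rest

/-- The subsequence of a word consisting of the non-first occurrences of letters,
given a list `seen` of letters already encountered. -/
def nonFirstOccs {X : Type*} [DecidableEq X] : List X → List X → List X
  | _, [] => []
  | seen, a :: rest =>
      if a ∈ seen then a :: nonFirstOccs seen rest else nonFirstOccs (a :: seen) rest


section Aux
variable {X M : Type*} [DecidableEq X] [Monoid M]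


lemma perm_sort (seen w : List X) :
    (firstOccs seen w ++ nonFirstOccs seen w).Perm w := by
  induction w generalizing seen with
  | nil => simp [firstOccs, nonFirstOccs]
  | cons b rest ih =>
    by_cases h : b ∈ seen
    · simp only [firstOccs, nonFirstOccs, if_pos h]
      exact (List.perm_middle).trans ((ih seen).cons b)
    · simp only [firstOccs, nonFirstOccs, if_neg h, List.cons_append]
      exact (ih _).cons b

lemma mem_of_mem_firstOccs {a : X} : ∀ {seen w : List X}, a ∈ firstOccs seen w → a ∈ w := by
  intro seen w
  induction w generalizing seen with
  | nil => simp [firstOccs]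
  | cons b rest ih =>
    by_cases h : b ∈ seen
    · simp only [firstOccs, if_pos h]
      intro h'; exact List.mem_cons_of_mem _ (ih h')
    · simp only [firstOccs, if_neg h, List.mem_cons]
      rintro (rfl | h')
      · exact Or.inl rfl
      · exact Or.inr (ih h')

lemma not_seen_of_mem_firstOccs {a : X} : ∀ {seen w : List X}, a ∈ firstOccs seen w → a ∉ seen := by
  intro seen w
  induction w generalizing seen with
  | nil => simp [firstOccs]
  | cons b rest ih =>
    by_cases h : b ∈ seen
    · simp only [firstOccs, if_pos h]; exact ih
    · simp only [firstOccs, if_neg h, List.mem_cons]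
      rintro (rfl | h')
      · exact h
      · intro hs; exact ih h' (List.mem_cons_of_mem _ hs)

lemma mem_nonFirstOccs {a : X} : ∀ {seen w : List X}, a ∈ w →
    (a ∈ seen ∨ 2 ≤ w.count a) → a ∈ nonFirstOccs seen w := by
  intro seen w
  induction w generalizing seen with
  | nil => simp
  | cons b rest ih =>
    intro hmem hc
    by_cases h : b ∈ seen
    · simp only [nonFirstOccs, if_pos h, List.mem_cons]
      rcases List.mem_cons.1 hmem with rfl | hmem'
      · exact Or.inl rfl
      · refine Or.inr (ih hmem' ?_)
        rcases hc with hc | hc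
        · exact Or.inl hc
        · by_cases hab : a = b
          · subst hab; exact Or.inl h
          · right; rwa [List.count_cons_of_ne (Ne.symm hab)] at hc
    · simp only [nonFirstOccs, if_neg h]
      rcases List.mem_cons.1 hmem with rfl | hmem'
      · rcases hc with hc | hc
        · exact absurd hc h
        · rw [List.count_cons_self] at hc
          have : a ∈ rest := List.count_pos_iff.1 (by omega)
          exact ih this (Or.inl (List.mem_cons_self))
      · refine ih hmem' ?_
        by_cases hab : a = b
        · subst hab; exact Or.inl (List.mem_cons_self)
        · rcases hc with hc | hc
          · exact Or.inl (List.mem_cons_of_mem _ hc)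
          · right; rwa [List.count_cons_of_ne (Ne.symm hab)] at hc


lemma coreR (hM : ∀ x y z t : M, x * z * x * y * t * y = x * z * y * x * t * y)
    (p c d s x y : M) :
    p * (x * (c * (x * (y * (d * (y * s)))))) = p * (x * (c * (y * (x * (d * (y * s)))))) := by
  have h2 : p * (x * c * x * y * d * y) * s = p * (x * c * y * x * d * y) * s := by
    rw [hM]
  simpa only [mul_assoc] using h2

lemma swapList (hM : ∀ x y z t : M, x * z * x * y * t * y = x * z * y * x * t * y)
    (φ : X → M) (P₁ P₂ D R : List X) (a y : X) :
    ((P₁ ++ a :: (P₂ ++ a :: y :: (D ++ y :: R))).map φ).prod =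
    ((P₁ ++ a :: (P₂ ++ y :: a :: (D ++ y :: R))).map φ).prod := by
  simp only [List.map_append, List.map_cons, List.prod_append, List.prod_cons, mul_assoc]
  exact coreR hM _ _ _ _ _ _

lemma passL (hM : ∀ x y z t : M, x * z * x * y * t * y = x * z * y * x * t * y)
    (φ : X → M) : ∀ (F P R : List X) (a : X), a ∈ P → (∀ y ∈ F, y ∈ R) →
    ((P ++ a :: (F ++ R)).map φ).prod = ((P ++ F ++ a :: R).map φ).prod := by
  intro F
  induction F with
  | nil => intro P R a _ _; simp
  | cons y F' ih =>
    intro P R a ha hy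
    obtain ⟨R₁, R₂, hR⟩ := List.append_of_mem (hy y (List.mem_cons_self))
    obtain ⟨P₁, P₂, hP⟩ := List.append_of_mem ha
    have step : ((P ++ a :: (y :: F' ++ R)).map φ).prod
        = ((P ++ y :: a :: (F' ++ R)).map φ).prod := by
      subst hR hP
      have h := swapList hM φ P₁ P₂ (F' ++ R₁) R₂ a y
      simp only [List.map_append, List.map_cons, List.prod_append, List.prod_cons,
        mul_assoc] at h ⊢
      exact h
    rw [step]
    have h2 := ih (P ++ [y]) R a (List.mem_append_left _ ha) (fun y' h => hy y' (List.mem_cons_of_mem _ h))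
    simp only [List.map_append, List.map_cons, List.prod_append, List.prod_cons,
      mul_assoc] at h2 ⊢
    simpa using h2


set_option maxHeartbeats 1000000 in
lemma sortL (hM : ∀ x y z t : M, x * z * x * y * t * y = x * z * y * x * t * y)
    (φ : X → M) : ∀ (w seen P S : List X),
    (∀ a ∈ w, a ∈ seen → a ∈ P) →
    (∀ a ∈ w, a ∉ seen → a ∉ P ∧ 1 < (P ++ w ++ S).count a) →
    ((P ++ w ++ S).map φ).prod =
      ((P ++ (firstOccs seen w ++ nonFirstOccs seen w) ++ S).map φ).prod := by
  intro w
  induction w with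
  | nil => intro seen P S _ _; simp [firstOccs, nonFirstOccs]
  | cons a rest ih =>
    intro seen P S hA hB
    by_cases h : a ∈ seen
    · -- non-first occurrence of a
      simp only [firstOccs, nonFirstOccs, if_pos h]
      set F := firstOccs seen rest with hF
      set N := nonFirstOccs seen rest with hN
      have hA' : ∀ b ∈ rest, b ∈ seen → b ∈ P ++ [a] := fun b hb hbs =>
        List.mem_append_left _ (hA b (List.mem_cons_of_mem _ hb) hbs)
      have hB' : ∀ b ∈ rest, b ∉ seen → b ∉ P ++ [a] ∧ 1 < ((P ++ [a]) ++ rest ++ S).count b := by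
        intro b hb hbs
        obtain ⟨h1, h2⟩ := hB b (List.mem_cons_of_mem _ hb) hbs
        constructor
        · simp only [List.mem_append, List.mem_singleton]
          rintro (h3 | rfl)
          · exact h1 h3
          · exact hbs h
        · have : ((P ++ [a]) ++ rest ++ S).count b = (P ++ a :: rest ++ S).count b := by
            simp [List.count_append, List.count_cons]
          rw [this]
          simpa using h2
      have hIH := ih seen (P ++ [a]) S hA' hB'
      have e1 : (P ++ a :: rest ++ S) = ((P ++ [a]) ++ rest ++ S) := by simp
      rw [e1, hIH]
      -- now : ((P ++ [a]) ++ (F ++ N) ++ S) ; move a past F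
      have hpass := passL hM φ F P (N ++ S) a (hA a (List.mem_cons_self) h) ?_
      · calc (((P ++ [a]) ++ (F ++ N) ++ S).map φ).prod
            = ((P ++ a :: (F ++ (N ++ S))).map φ).prod := by
              simp [List.append_assoc]
          _ = ((P ++ F ++ a :: (N ++ S)).map φ).prod := hpass
          _ = ((P ++ (F ++ a :: N) ++ S).map φ).prod := by
              simp [List.append_assoc]
      · -- every y in F occurs later: in N or in S
        intro y hyF
        have hyrest : y ∈ rest := mem_of_mem_firstOccs hyF
        have hyseen : y ∉ seen := not_seen_of_mem_firstOccs hyF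
        obtain ⟨hyP, hyc⟩ := hB y (List.mem_cons_of_mem _ hyrest) hyseen
        have hya : y ≠ a := fun e => hyseen (e ▸ h)
        have hcP : P.count y = 0 := List.count_eq_zero.2 hyP
        have hc2 : 1 < rest.count y + S.count y := by
          have := hyc
          simp [List.count_append, List.count_cons, hcP, hya, Ne.symm hya] at this
          omega
        by_cases hyS : y ∈ S
        · exact List.mem_append_right _ hyS
        · have : S.count y = 0 := List.count_eq_zero.2 hyS
          have : 2 ≤ rest.count y := by omega
          exact List.mem_append_left _ (mem_nonFirstOccs hyrest (Or.inr this))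
    · -- first occurrence of a : just recurse, a stays in place
      simp only [firstOccs, nonFirstOccs, if_neg h]
      have hA' : ∀ b ∈ rest, b ∈ a :: seen → b ∈ P ++ [a] := by
        intro b hb hbs
        rcases List.mem_cons.1 hbs with rfl | hbs'
        · exact List.mem_append_right _ (List.mem_singleton_self _)
        · exact List.mem_append_left _ (hA b (List.mem_cons_of_mem _ hb) hbs')
      have hB' : ∀ b ∈ rest, b ∉ a :: seen → b ∉ P ++ [a] ∧ 1 < ((P ++ [a]) ++ rest ++ S).count b := by
        intro b hb hbs
        have hba : b ≠ a := fun e => hbs (e ▸ List.mem_cons_self)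
        have hbseen : b ∉ seen := fun e => hbs (List.mem_cons_of_mem _ e)
        obtain ⟨h1, h2⟩ := hB b (List.mem_cons_of_mem _ hb) hbseen
        constructor
        · simp only [List.mem_append, List.mem_singleton]
          rintro (h3 | rfl)
          · exact h1 h3
          · exact hba rfl
        · have : ((P ++ [a]) ++ rest ++ S).count b = (P ++ a :: rest ++ S).count b := by
            simp [List.count_append, List.count_cons]
          rw [this]; simpa using h2
      have hIH := ih (a :: seen) (P ++ [a]) S hA' hB'
      have e1 : (P ++ a :: rest ++ S) = ((P ++ [a]) ++ rest ++ S) := by simp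
      rw [e1, hIH]
      congr 1
      simp [List.append_assoc]

end Aux

theorem stmt13 {X M : Type*} [DecidableEq X] [Monoid M]
    (hM : ∀ x y z t : M, x * z * x * y * t * y = x * z * y * x * t * y)
    (m : ℕ) (t : ℕ → X) (uB : ℕ → List X)
    (B : ℕ → List X)
    (hB0 : B 0 = uB 0)
    (hBs : ∀ k, B (k + 1) = t k :: uB (k + 1))
    (u : List X) (hu : u = ((List.range (m + 1)).map B).flatten)
    (hsimple : ∀ i < m, u.count (t i) = 1)
    (hmul : ∀ k ≤ m, ∀ a ∈ uB k, 1 < u.count a)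
    (u' : List X)
    (hu' : u' = ((List.range (m + 1)).map (fun k =>
        firstOccs (((List.range k).map B).flatten) (B k) ++
        nonFirstOccs (((List.range k).map B).flatten) (B k))).flatten) :
    ∀ φ : X → M, (u.map φ).prod = (u'.map φ).prod := by
  intro φ
  set seenL : ℕ → List X := fun j => ((List.range j).map B).flatten with hseenL
  set sortedB : ℕ → List X := fun k =>
    firstOccs (seenL k) (B k) ++ nonFirstOccs (seenL k) (B k) with hsortedB
  set PL : ℕ → List X := fun j => ((List.range j).map sortedB).flatten with hPL
  set SL : ℕ → List X := fun j => ((List.range' j (m + 1 - j)).map B).flatten with hSL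
  have hPerm : ∀ j, (PL j).Perm (seenL j) := by
    intro j
    induction j with
    | zero => simp [hPL, hseenL]
    | succ j ih =>
      have e1 : PL (j+1) = PL j ++ sortedB j := by
        simp [hPL, List.range_succ]
      have e2 : seenL (j+1) = seenL j ++ B j := by
        simp [hseenL, List.range_succ]
      rw [e1, e2]
      exact ih.append (perm_sort _ _)
  have hSLstep : ∀ j ≤ m, SL j = B j ++ SL (j+1) := by
    intro j hj
    have e : m + 1 - j = (m - j) + 1 := by omega
    have e2 : m + 1 - (j + 1) = m - j := by omega
    simp [hSL, e, e2, List.range'_succ]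
  have hsplit : ∀ j ≤ m + 1, seenL j ++ SL j = u := by
    intro j hj
    have hr : List.range' 0 j 1 ++ List.range' j (m + 1 - j) 1 = List.range' 0 (m + 1) 1 := by
      have := List.range'_append (s := 0) (m := j) (n := m + 1 - j) (step := 1)
      simp only [Nat.zero_add, Nat.one_mul] at this
      rw [this]
      congr 1
      omega
    rw [hu, hseenL, hSL]
    simp only [List.range_eq_range']
    rw [← hr]
    simp [List.flatten_append]
  have claim : ∀ j, j ≤ m + 1 → (u.map φ).prod = ((PL j ++ SL j).map φ).prod := by
    intro j
    induction j with
    | zero =>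
      intro _
      have : SL 0 = u := by
        have := hsplit 0 (Nat.zero_le _)
        simpa [hseenL] using this
      simp [hPL, this]
    | succ j ih =>
      intro hj
      have hjm : j ≤ m := by omega
      have ihv := ih (by omega)
      rw [ihv]
      have ePL : PL (j+1) = PL j ++ sortedB j := by
        simp [hPL, List.range_succ]
      have hBS := hSLstep j hjm
      have husplit : seenL j ++ (B j ++ SL (j+1)) = u := by
        rw [← hBS]; exact hsplit j (by omega)
      rcases Nat.eq_zero_or_eq_succ_pred j with hj0 | hjs
      · -- j = 0
        subst hj0
        have hseen0 : seenL 0 = [] := by simp [hseenL]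
        have hPL0 : PL 0 = [] := by simp [hPL]
        have hsort := sortL hM φ (uB 0) [] [] (SL 1)
            (by intro a _ h; simp at h)
            (by
              intro a ha _
              refine ⟨by simp, ?_⟩
              have : ([] ++ uB 0 ++ SL 1 : List X) = u := by
                have := husplit
                simpa [hseen0, hB0] using this
              rw [this]
              exact hmul 0 (Nat.zero_le _) a ha)
        rw [hBS, hB0, hPL0]
        rw [ePL, hPL0]
        simpa [hsortedB, hseen0, hB0] using hsort
      · -- j = k+1
        set k := j - 1 with hk
        have hjk : j = k + 1 := by omega
        have hkm : k < m := by omega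
        have hBj : B j = t k :: uB j := by rw [hjk]; exact hBs k
        have htk_mem : t k ∈ SL j := by
          rw [hBS, hBj]; exact List.mem_append_left _ (List.mem_cons_self)
        have htk_not : t k ∉ seenL j := by
          intro hmem
          have hc : u.count (t k) = (seenL j).count (t k) + (SL j).count (t k) := by
            rw [← hsplit j (by omega), List.count_append]
          have h1 : 1 ≤ (seenL j).count (t k) := List.count_pos_iff.2 hmem
          have h2 : 1 ≤ (SL j).count (t k) := List.count_pos_iff.2 htk_mem
          have := hsimple k hkm
          omega
        have hsortj : sortedB j = t k :: (firstOccs (t k :: seenL j) (uB j) ++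
            nonFirstOccs (t k :: seenL j) (uB j)) := by
          rw [hsortedB]
          simp only [hBj, firstOccs, nonFirstOccs, if_neg htk_not, List.cons_append]
        have hpermfull : ((PL j ++ [t k]) ++ uB j ++ SL (j+1)).Perm u := by
          have p1 : ((PL j ++ [t k]) ++ uB j ++ SL (j+1)).Perm
              ((seenL j ++ [t k]) ++ uB j ++ SL (j+1)) :=
            (((hPerm j).append_right [t k]).append_right _).append_right _
          refine p1.trans (List.Perm.of_eq ?_)
          rw [← husplit, hBj]
          simp
        have hsort := sortL hM φ (uB j) (t k :: seenL j) (PL j ++ [t k]) (SL (j+1))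
            (by
              intro a _ ha
              rcases List.mem_cons.1 ha with rfl | ha'
              · exact List.mem_append_right _ (List.mem_singleton_self _)
              · exact List.mem_append_left _ ((hPerm j).mem_iff.2 ha'))
            (by
              intro a ha hns
              have hat : a ≠ t k := fun e => hns (e ▸ List.mem_cons_self)
              have has : a ∉ seenL j := fun e => hns (List.mem_cons_of_mem _ e)
              refine ⟨?_, ?_⟩
              · simp only [List.mem_append, List.mem_singleton]
                rintro (h1 | rfl)
                · exact has ((hPerm j).mem_iff.1 h1)
                · exact hat rfl
              · rw [hpermfull.count_eq]
                exact hmul j hjm a ha)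
        have eL : (PL j ++ SL j) = ((PL j ++ [t k]) ++ uB j ++ SL (j+1)) := by
          rw [hBS, hBj]; simp
        have eR : ((PL j ++ [t k]) ++ (firstOccs (t k :: seenL j) (uB j) ++
            nonFirstOccs (t k :: seenL j) (uB j)) ++ SL (j+1))
            = (PL (j+1) ++ SL (j+1)) := by
          rw [ePL, hsortj]; simp
        rw [eL, hsort, eR]
  have final := claim (m+1) (le_refl _)
  have hSLend : SL (m+1) = [] := by simp [hSL]
  have hPLend : PL (m+1) = u' := by
    rw [hu', hPL, hsortedB, hseenL]
  rw [final, hSLend, hPLend, List.append_nil]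
end
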